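/- arXiv:1502.00519 — 3 statements merged into one kernel-verified Lean document; each statement's English description precedes it below -/
import Mathlib

section
/- For real numbers λ_1,…,λ_m with m ≥ 2, and any pair of indices i ≠ j, if |H| = λ_1+…+λ_m and |A|² = λ_1²+…+λ_m², then |A|² − |H|²/(m−1) ≥ −2 λ_i λ_j. More precisely, |A|² − |H|²/(m−1) = −2λ_iλ_j + (λ_i+λ_j − |H|/(m−1))² + Σ_{l≠i,j} (λ_l − |H|/(m−1))². -/
/-- Huisken's algebraic identity: for principal curvatures `λ`,
`|A|² − |H|²/(m−1) = −2λᵢλⱼ + (λᵢ+λⱼ − |H|/(m−1))² + Σ_{l≠i,j} (λ_l − |H|/(m−1))²`,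
and in particular `|A|² − |H|²/(m−1) ≥ −2λᵢλⱼ`. -/
theorem stmt_0 (m : ℕ) (hm : 2 ≤ m) (lam : Fin m → ℝ) (i j : Fin m) (hij : i ≠ j)
    (H A2 : ℝ) (hH : H = ∑ l, lam l) (hA : A2 = ∑ l, (lam l) ^ 2) :
    A2 - H ^ 2 / ((m : ℝ) - 1) =
      -2 * lam i * lam j + (lam i + lam j - H / ((m : ℝ) - 1)) ^ 2 +
        ∑ l, (if l ≠ i ∧ l ≠ j then (lam l - H / ((m : ℝ) - 1)) ^ 2 else 0) ∧
    A2 - H ^ 2 / ((m : ℝ) - 1) ≥ -2 * lam i * lam j := by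
  have hne : (m : ℝ) - 1 ≠ 0 := by
    have : (2:ℝ) ≤ (m:ℝ) := by exact_mod_cast hm
    linarith
  set c := H / ((m : ℝ) - 1) with hc
  have key : ∀ f : Fin m → ℝ, (∑ l, (if l ≠ i ∧ l ≠ j then f l else 0))
      = (∑ l, f l) - f i - f j := by
    intro f
    have hpt : ∀ l, (if l ≠ i ∧ l ≠ j then f l else 0)
        = f l - (if l = i then f l else 0) - (if l = j then f l else 0) := by
      intro l
      rcases eq_or_ne l i with h1 | h1
      · subst h1; simp [hij]
      · rcases eq_or_ne l j with h2 | h2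
        · subst h2; simp [h1]
        · simp [h1, h2]
    simp [hpt, Finset.sum_sub_distrib, Finset.sum_ite_eq']
  have e1 : (∑ l, (lam l - c) ^ 2) = A2 - 2 * c * H + (m : ℝ) * c ^ 2 := by
    have : ∀ l, (lam l - c) ^ 2 = (lam l) ^ 2 - 2 * c * lam l + c ^ 2 := by
      intro l; ring
    simp only [this, Finset.sum_add_distrib, Finset.sum_sub_distrib, ← Finset.mul_sum,
      Finset.sum_const, Finset.card_univ, Fintype.card_fin, nsmul_eq_mul, ← hH, ← hA]
  have hid : A2 - H ^ 2 / ((m : ℝ) - 1) =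
      -2 * lam i * lam j + (lam i + lam j - c) ^ 2 +
        ∑ l, (if l ≠ i ∧ l ≠ j then (lam l - c) ^ 2 else 0) := by
    rw [key (fun l => (lam l - c) ^ 2), e1, hc]
    field_simp
    ring
  refine ⟨hid, ?_⟩
  rw [hid]
  have h1 : (0:ℝ) ≤ (lam i + lam j - c) ^ 2 := sq_nonneg _
  have h2 : (0:ℝ) ≤ ∑ l, (if l ≠ i ∧ l ≠ j then (lam l - c) ^ 2 else 0) := by
    apply Finset.sum_nonneg
    intro l _
    split <;> positivity
  linarith
end

section
/- Let m ≥ 2 and ε ∈ (0,1). If λ_1,…,λ_m ∈ ℝ satisfy Σλ_i² ≤ (Σλ_i)²/(m−1+ε) + 2(1−ε), then for all i ≠ j, 2(1 + λ_iλ_j) ≥ ε(((Σλ_i)²)/((m−1)(m−1+ε)) + 2) > 0. -/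
set_option maxHeartbeats 1000000 in
/-- Positivity of intrinsic sectional curvature for pinched hypersurfaces:
if `Σλᵢ² ≤ (Σλᵢ)²/(m−1+ε) + 2(1−ε)` with `m ≥ 2`, `ε ∈ (0,1)`, then for `i ≠ j`
`2(1 + λᵢλⱼ) ≥ ε((Σλᵢ)²/((m−1)(m−1+ε)) + 2) > 0`. -/
theorem stmt_13 (m : ℕ) (hm : 2 ≤ m) (ε : ℝ) (hε0 : 0 < ε) (hε1 : ε < 1)
    (lam : Fin m → ℝ)
    (hpinch : ∑ i, (lam i) ^ 2 ≤ (∑ i, lam i) ^ 2 / ((m : ℝ) - 1 + ε) + 2 * (1 - ε)) :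
    ∀ i j : Fin m, i ≠ j →
      2 * (1 + lam i * lam j) ≥
        ε * ((∑ i, lam i) ^ 2 / (((m : ℝ) - 1) * ((m : ℝ) - 1 + ε)) + 2) ∧
      ε * ((∑ i, lam i) ^ 2 / (((m : ℝ) - 1) * ((m : ℝ) - 1 + ε)) + 2) > 0 := by
  intro i j hij
  classical
  have hm2 : (2:ℝ) ≤ (m:ℝ) := by exact_mod_cast hm
  have he : (0:ℝ) < (m:ℝ) - 1 := by linarith
  have hd : (0:ℝ) < (m:ℝ) - 1 + ε := by linarith
  set H : ℝ := ∑ i, lam i with hHdef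
  have hpos : ε * (H ^ 2 / (((m:ℝ)-1) * ((m:ℝ)-1+ε)) + 2) > 0 := by positivity
  refine ⟨?_, hpos⟩
  -- decompose the sums
  set s : Finset (Fin m) := (Finset.univ.erase i).erase j with hs
  have hji : j ∈ Finset.univ.erase i := Finset.mem_erase.mpr ⟨hij.symm, Finset.mem_univ j⟩
  set S : ℝ := ∑ k ∈ s, lam k with hSdef
  set Q : ℝ := ∑ k ∈ s, (lam k) ^ 2 with hQdef
  have hH : H = lam i + lam j + S := by
    rw [hHdef, ← Finset.add_sum_erase _ lam (Finset.mem_univ i),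
      ← Finset.add_sum_erase _ lam hji]
    ring
  have hA : ∑ k, (lam k) ^ 2 = lam i ^ 2 + lam j ^ 2 + Q := by
    rw [← Finset.add_sum_erase _ (fun k => lam k ^ 2) (Finset.mem_univ i),
      ← Finset.add_sum_erase _ (fun k => lam k ^ 2) hji]
    ring
  have hcard : (s.card : ℝ) = (m:ℝ) - 2 := by
    have h1 : s.card = m - 1 - 1 := by
      rw [hs, Finset.card_erase_of_mem hji, Finset.card_erase_of_mem (Finset.mem_univ i),
        Finset.card_univ, Fintype.card_fin]
    rw [h1, show m - 1 - 1 = m - 2 from by omega, Nat.cast_sub hm]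
    norm_num
  have hCS : S ^ 2 ≤ ((m:ℝ) - 2) * Q := by
    have h := sq_sum_le_card_mul_sum_sq (s := s) (f := lam)
    rw [hcard] at h
    exact h
  have hQ0 : (0:ℝ) ≤ Q := Finset.sum_nonneg fun k _ => sq_nonneg (lam k)
  -- the key algebraic inequality : 2 λi λj ≥ H²/(m-1) - |A|²
  have hexpr : 0 ≤ ((m:ℝ)-1) * (lam i + lam j) ^ 2 + ((m:ℝ)-1) * Q
      - (lam i + lam j + S) ^ 2 := by
    rcases eq_or_lt_of_le hm2 with hm2' | hm3
    · -- m = 2 : S = 0, Q ≥ 0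
      have hm2'' : (m:ℝ) - 2 = 0 := by linarith
      have hS0 : S = 0 := by
        have h1 : S ^ 2 ≤ 0 := by rw [hm2''] at hCS; linarith
        have h2 := sq_nonneg S
        have h3 : S ^ 2 = 0 := le_antisymm h1 h2
        exact pow_eq_zero_iff (n := 2) (by norm_num) |>.mp h3
      rw [hS0]
      nlinarith [hQ0]
    · have ha : (0:ℝ) < (m:ℝ) - 2 := by linarith
      nlinarith [sq_nonneg (((m:ℝ) - 2) * (lam i + lam j) - S),
        mul_nonneg he.le (sub_nonneg.mpr hCS), ha]
  have hkey : ((m:ℝ) - 1) * (2 * (lam i * lam j)) ≥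
      H ^ 2 - ((m:ℝ) - 1) * (lam i ^ 2 + lam j ^ 2 + Q) := by
    rw [hH]
    nlinarith [hexpr]
  -- clear denominators in the pinching hypothesis
  have hp : ((m:ℝ) - 1 + ε) * (lam i ^ 2 + lam j ^ 2 + Q) ≤ H ^ 2 + 2 * (1 - ε) * ((m:ℝ) - 1 + ε) := by
    rw [← hA]
    have := hpinch
    rw [div_add' _ _ _ (ne_of_gt hd)] at this
    have h2 := (le_div_iff₀ hd).mp this
    linarith [h2]
  -- finish
  rw [ge_iff_le, ← sub_nonneg]
  have heq : 2 * (1 + lam i * lam j) - ε * (H ^ 2 / (((m:ℝ)-1) * ((m:ℝ)-1+ε)) + 2) =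
      (((m:ℝ)-1) * ((m:ℝ)-1+ε) * (2 * (1 + lam i * lam j)) -
        (ε * H ^ 2 + 2 * ε * (((m:ℝ)-1) * ((m:ℝ)-1+ε)))) / (((m:ℝ)-1) * ((m:ℝ)-1+ε)) := by
    field_simp
  rw [heq]
  apply div_nonneg _ (le_of_lt (mul_pos he hd))
  have h1 := mul_le_mul_of_nonneg_left hkey.le hd.le
  have h2 := mul_le_mul_of_nonneg_left hp he.le
  nlinarith [h1, h2]
end

section
/- Let m ≥ 2 and ε ∈ (0, 1/2]. Suppose nonnegative reals h₁², h₋², H² satisfy H² ≥ (m(m−1+ε)/(1−ε))·(h₁² + h₋² − b) with b > 0, and define Z_low = −(m/2)h₁⁴ − (3/2)h₋⁴ − ((m+2)/2)h₁²h₋² + (1/(2(m−1)))(h₁²+h₋²)H². Then Z_low + 2mb(h₁²+h₋²) ≥ (εm/(2(1−ε))) h₁⁴ + ((m−3+3ε)/(2(1−ε))) h₋⁴ + ((m−2+ε(m+2))/(2(1−ε))) h₁²h₋² + (2m − m/(2(1−ε))) b (h₁²+h₋²). -/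
/-- Key computation in the lower bound for `Z + 2mb|Å|²` in higher codimension. -/
theorem stmt_14 (m : ℕ) (hm : 2 ≤ m) (ε : ℝ) (hε0 : 0 < ε) (hε1 : ε ≤ 1 / 2)
    (h1 h2 H2 b : ℝ) (hh1 : 0 ≤ h1) (hh2 : 0 ≤ h2) (hH2 : 0 ≤ H2) (hb : 0 < b)
    (hpinch : H2 ≥ ((m : ℝ) * ((m : ℝ) - 1 + ε) / (1 - ε)) * (h1 + h2 - b)) :
    (-(((m : ℝ)) / 2) * h1 ^ 2 - (3 / 2) * h2 ^ 2 - (((m : ℝ) + 2) / 2) * (h1 * h2)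
        + (1 / (2 * ((m : ℝ) - 1))) * (h1 + h2) * H2)
      + 2 * (m : ℝ) * b * (h1 + h2) ≥
    (ε * (m : ℝ) / (2 * (1 - ε))) * h1 ^ 2
      + (((m : ℝ) - 3 + 3 * ε) / (2 * (1 - ε))) * h2 ^ 2
      + (((m : ℝ) - 2 + ε * ((m : ℝ) + 2)) / (2 * (1 - ε))) * (h1 * h2)
      + (2 * (m : ℝ) - (m : ℝ) / (2 * (1 - ε))) * b * (h1 + h2) := by
  have hM : (2 : ℝ) ≤ (m : ℝ) := by exact_mod_cast hm
  have hM1 : (0 : ℝ) < (m : ℝ) - 1 := by linarith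
  have hε : (0 : ℝ) < 1 - ε := by linarith
  have hs : 0 ≤ h1 + h2 := by linarith
  have hpinch' : (m : ℝ) * ((m : ℝ) - 1 + ε) * (h1 + h2 - b) ≤ H2 * (1 - ε) := by
    rw [ge_iff_le, div_mul_eq_mul_div, div_le_iff₀ hε] at hpinch
    exact hpinch
  rw [ge_iff_le, ← sub_nonneg]
  have hD : (0 : ℝ) < 2 * ((m : ℝ) - 1) * (2 * (1 - ε)) := by positivity
  rw [← mul_nonneg_iff_of_pos_left hD]
  have expand : 2 * ((m : ℝ) - 1) * (2 * (1 - ε)) *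
      (((-(((m : ℝ)) / 2) * h1 ^ 2 - (3 / 2) * h2 ^ 2 - (((m : ℝ) + 2) / 2) * (h1 * h2)
        + (1 / (2 * ((m : ℝ) - 1))) * (h1 + h2) * H2)
      + 2 * (m : ℝ) * b * (h1 + h2) -
      ((ε * (m : ℝ) / (2 * (1 - ε))) * h1 ^ 2
      + (((m : ℝ) - 3 + 3 * ε) / (2 * (1 - ε))) * h2 ^ 2
      + (((m : ℝ) - 2 + ε * ((m : ℝ) + 2)) / (2 * (1 - ε))) * (h1 * h2)
      + (2 * (m : ℝ) - (m : ℝ) / (2 * (1 - ε))) * b * (h1 + h2)))) =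
      2 * (1 - ε) * ((h1 + h2) * H2)
        - 2 * (m : ℝ) * ((m : ℝ) - 1) * (h1 + h2) ^ 2
        + 2 * ((m : ℝ) - 1) * ((m : ℝ) * b * (h1 + h2)) := by
    field_simp; ring
  rw [expand]
  rcases le_or_gt (h1 + h2) b with hc | hc
  · have h3 : 0 ≤ (m : ℝ) * ((m : ℝ) - 1) * ((h1 + h2) * (b - (h1 + h2))) :=
      mul_nonneg (mul_nonneg (by linarith) hM1.le) (mul_nonneg hs (by linarith))
    nlinarith [mul_nonneg (mul_nonneg hs hH2) hε.le]
  · have key := mul_le_mul_of_nonneg_left hpinch' hs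
    have hq : 0 ≤ ε * (m : ℝ) * ((h1 + h2) * (h1 + h2 - b)) :=
      mul_nonneg (mul_nonneg hε0.le (by linarith)) (mul_nonneg hs (by linarith))
    linarith [key, hq]
end
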